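/- Additivity of day addition: for every valid date D and all integers n and k, (D +D n) +D k = D +D (n + k). -/

import Mathlib

/-- A date is a triple of integers (year, month, day). -/
structure Date where
  y : ℤ
  m : ℤ
  d : ℤ

/-- A year is a leap year iff divisible by 4 and (not by 100, or by 400). -/
def isLeap (y : ℤ) : Prop :=
  y % 4 = 0 ∧ (y % 100 ≠ 0 ∨ y % 400 = 0)

/-- Number of days in month `m` of year `y`. -/
def nbdays (y m : ℤ) : ℤ :=
  if m = 4 ∨ m = 6 ∨ m = 9 ∨ m = 11 then 30
  else if m = 2 then
    (if y % 4 = 0 ∧ (y % 100 ≠ 0 ∨ y % 400 = 0) then 29 else 28)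
  else 31

/-- A date is valid iff `1 ≤ m ≤ 12` and `1 ≤ d ≤ nbdays y m`. -/
def Date.valid (D : Date) : Prop :=
  1 ≤ D.m ∧ D.m ≤ 12 ∧ 1 ≤ D.d ∧ D.d ≤ nbdays D.y D.m

/-- Month addition `(y, m, d) +m n`, with round-down of the day component. -/
def addMonths (D : Date) (n : ℤ) : Date :=
  ⟨D.y + (D.m - 1 + n) / 12,
   1 + (D.m - 1 + n) % 12,
   min D.d (nbdays (D.y + (D.m - 1 + n) / 12) (1 + (D.m - 1 + n) % 12))⟩

/-- A configuration of the small-step day-addition machine: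
either a pending addition `D +D n`, or a finished date. -/
inductive Conf where
  | pending (D : Date) (n : ℤ)
  | done (D : Date)

/-- Small-step rules for day addition `+D`. -/
inductive Step : Conf → Conf → Prop where
  | add_days {y m d n : ℤ}
      (h1 : 1 ≤ d + n) (h2 : d + n ≤ nbdays y m) :
      Step (Conf.pending ⟨y, m, d⟩ n) (Conf.done ⟨y, m, d + n⟩)
  | add_days_over {y m d n : ℤ}
      (h : d + n > nbdays y m) :
      Step (Conf.pending ⟨y, m, d⟩ n)
        (Conf.pending (addMonths ⟨y, m, 1⟩ 1) (n - (nbdays y m - d) - 1))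
  | add_days_under1 {y m d n : ℤ}
      (h1 : 1 < d) (h2 : d + n ≤ 0) :
      Step (Conf.pending ⟨y, m, d⟩ n) (Conf.pending ⟨y, m, 1⟩ (d - 1 + n))
  | add_days_under2 {y m n y' m' : ℤ}
      (h1 : 1 + n ≤ 0) (h2 : addMonths ⟨y, m, 1⟩ (-1) = ⟨y', m', 1⟩) :
      Step (Conf.pending ⟨y, m, 1⟩ n) (Conf.pending ⟨y', m', 1⟩ (n + nbdays y' m'))

/-- Reduction in finitely many steps. -/
def Reduces : Conf → Conf → Prop := Relation.ReflTransGen Step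

instance : Nonempty Date := ⟨⟨2000, 3, 1⟩⟩

/-- `addDays D n` is the unique valid normal form of `D +D n`
(when it exists; arbitrary otherwise). -/
noncomputable def addDays (D : Date) (n : ℤ) : Date :=
  Classical.epsilon fun D' : Date =>
    D'.valid ∧ Reduces (Conf.pending D n) (Conf.done D')

/-- Date-period addition `D +P (ny, nm, nd) = (D +m (12·ny + nm)) +D nd`. -/
noncomputable def addPeriod (D : Date) (P : ℤ × ℤ × ℤ) : Date :=
  addDays (addMonths D (12 * P.1 + P.2.1)) P.2.2

/-- Lexicographic order on dates. -/
def Date.le (a b : Date) : Prop :=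
  a.y < b.y ∨ (a.y = b.y ∧ a.m < b.m) ∨ (a.y = b.y ∧ a.m = b.m ∧ a.d ≤ b.d)

/-- Strict lexicographic order on dates. -/
def Date.lt (a b : Date) : Prop :=
  a.y < b.y ∨ (a.y = b.y ∧ a.m < b.m) ∨ (a.y = b.y ∧ a.m = b.m ∧ a.d < b.d)

/-- The epoch date: March 1, 2000. -/
def epoch : Date := ⟨2000, 3, 1⟩

/-- `toDelta D` is the unique integer `n` with `epoch +D n = D`
(when it exists; arbitrary otherwise). -/
noncomputable def toDelta (D : Date) : ℤ :=
  Classical.epsilon fun n : ℤ => addDays epoch n = D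

/-! Number the months consecutively, `(y, m)` being month `12 * y + m - 1`, and the days
consecutively, month `i` starting at `firstDay i`, the sum of the lengths of the months before
it. The step relation is deterministic, and from a valid date `D` every run of `D +D n` ends at
the date whose day number is that of `D` plus `n`. So `D +D n` is that date, and additivity of
`+D` is additivity of day numbers. -/

namespace Int

variable {f : ℤ → ℤ}

theorem add_sub_le_of_strictMono (hf : StrictMono f) {i j : ℤ} (hij : i ≤ j) :
    f i + (j - i) ≤ f j := by
  induction j, hij using Int.leInduction with
  | base => simp
  | succ j _ ih => have := hf (lt_add_one j); omega

theorem exists_le_lt_of_strictMono (hf : StrictMono f) (N : ℤ) :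
    ∃ i, f i ≤ N ∧ N < f (i + 1) := by
  have hbdd : ∃ b, ∀ i, f i ≤ N → i ≤ b := by
    refine ⟨max 0 (N - f 0), fun i hi => ?_⟩
    rcases le_total 0 i with h | h
    · have := add_sub_le_of_strictMono hf h; omega
    · omega
  have hne : ∃ i, f i ≤ N := by
    refine ⟨min 0 (N - f 0), ?_⟩
    have := add_sub_le_of_strictMono hf (min_le_left 0 (N - f 0)); omega
  obtain ⟨i, hi, hmax⟩ := Int.exists_greatest_of_bdd hbdd hne
  exact ⟨i, hi, not_le.1 fun h => by have := hmax _ h; omega⟩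

theorem eq_of_le_lt_of_strictMono (hf : StrictMono f) {N i j : ℤ} (hi : f i ≤ N)
    (hi' : N < f (i + 1)) (hj : f j ≤ N) (hj' : N < f (j + 1)) : i = j := by
  have key : ∀ {a b : ℤ}, f a ≤ N → N < f (b + 1) → a ≤ b := fun ha hb =>
    Int.lt_add_one_iff.1 (hf.lt_iff_lt.1 (lt_of_le_of_lt ha hb))
  exact le_antisymm (key hi hj') (key hj hi')

end Int

theorem nbdays_pos (y m : ℤ) : 0 < nbdays y m := by
  unfold nbdays; split_ifs <;> norm_num

def monthStart (i : ℤ) : Date := ⟨i / 12, 1 + i % 12, 1⟩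

def monthLength (i : ℤ) : ℤ := nbdays (i / 12) (1 + i % 12)

def Date.monthIndex (D : Date) : ℤ := 12 * D.y + D.m - 1

/-- The signed number of days from the start of month `0` to the start of month `i`. -/
noncomputable def firstDay (i : ℤ) : ℤ :=
  ∑ j ∈ Finset.Ico 0 i, monthLength j - ∑ j ∈ Finset.Ico i 0, monthLength j

theorem firstDay_add_one (i : ℤ) : firstDay (i + 1) = firstDay i + monthLength i := by
  unfold firstDay
  rcases le_or_gt 0 i with h | h
  · rw [← Finset.insert_Ico_right_eq_Ico_add_one h, Finset.sum_insert Finset.right_notMem_Ico,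
      Finset.Ico_eq_empty_of_le h, Finset.Ico_eq_empty_of_le (by omega : (0 : ℤ) ≤ i + 1)]
    ring
  · rw [← Finset.insert_Ico_add_one_left_eq_Ico h, Finset.sum_insert (by simp),
      Finset.Ico_eq_empty_of_le h.le, Finset.Ico_eq_empty_of_le (by omega : i + 1 ≤ 0)]
    ring

theorem firstDay_strictMono : StrictMono firstDay :=
  strictMono_int_of_lt_succ fun i => by
    rw [firstDay_add_one]; exact lt_add_of_pos_right _ (nbdays_pos _ _)

theorem exists_firstDay_le_lt (N : ℤ) : ∃ i, firstDay i ≤ N ∧ N < firstDay (i + 1) :=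
  Int.exists_le_lt_of_strictMono firstDay_strictMono N

noncomputable def monthOfDay (N : ℤ) : ℤ := Classical.choose (exists_firstDay_le_lt N)

theorem firstDay_monthOfDay_le (N : ℤ) : firstDay (monthOfDay N) ≤ N :=
  (Classical.choose_spec (exists_firstDay_le_lt N)).1

theorem lt_firstDay_monthOfDay_add_one (N : ℤ) : N < firstDay (monthOfDay N + 1) :=
  (Classical.choose_spec (exists_firstDay_le_lt N)).2

theorem monthOfDay_eq {N i : ℤ} (hi : firstDay i ≤ N) (hi' : N < firstDay (i + 1)) :
    monthOfDay N = i :=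
  Int.eq_of_le_lt_of_strictMono firstDay_strictMono (firstDay_monthOfDay_le N)
    (lt_firstDay_monthOfDay_add_one N) hi hi'

noncomputable def Date.dayNumber (D : Date) : ℤ := firstDay D.monthIndex + (D.d - 1)

noncomputable def ofDayNumber (N : ℤ) : Date :=
  ⟨monthOfDay N / 12, 1 + monthOfDay N % 12, 1 + (N - firstDay (monthOfDay N))⟩

theorem monthStart_monthIndex {D : Date} (h1 : 1 ≤ D.m) (h2 : D.m ≤ 12) :
    monthStart D.monthIndex = ⟨D.y, D.m, 1⟩ := by
  unfold monthStart Date.monthIndex; congr 1 <;> omega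

theorem monthLength_monthIndex {D : Date} (h1 : 1 ≤ D.m) (h2 : D.m ≤ 12) :
    monthLength D.monthIndex = nbdays D.y D.m := by
  unfold monthLength Date.monthIndex; congr 1 <;> omega

theorem addMonths_monthStart (i n : ℤ) : addMonths (monthStart i) n = monthStart (i + n) := by
  have hy : i / 12 + (1 + i % 12 - 1 + n) / 12 = (i + n) / 12 := by omega
  have hm : 1 + (1 + i % 12 - 1 + n) % 12 = 1 + (i + n) % 12 := by omega
  have := nbdays_pos ((i + n) / 12) (1 + (i + n) % 12)
  simp only [addMonths, monthStart, hy, hm, Date.mk.injEq, true_and]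
  omega

theorem ofDayNumber_valid (N : ℤ) : (ofDayNumber N).valid := by
  have h1 := firstDay_monthOfDay_le N
  have h2 := lt_firstDay_monthOfDay_add_one N
  rw [firstDay_add_one] at h2
  unfold monthLength at h2
  refine ⟨?_, ?_, ?_, ?_⟩ <;> dsimp only [ofDayNumber] <;> omega

theorem dayNumber_ofDayNumber (N : ℤ) : (ofDayNumber N).dayNumber = N := by
  have : (ofDayNumber N).monthIndex = monthOfDay N := by
    unfold ofDayNumber Date.monthIndex; dsimp only; omega
  rw [Date.dayNumber, this]; dsimp only [ofDayNumber]; ring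

theorem ofDayNumber_dayNumber {D : Date} (hD : D.valid) : ofDayNumber D.dayNumber = D := by
  obtain ⟨h1, h12, hd1, hd⟩ := hD
  have hmonth : monthOfDay D.dayNumber = D.monthIndex := by
    refine monthOfDay_eq (by unfold Date.dayNumber; omega) ?_
    rw [firstDay_add_one, monthLength_monthIndex h1 h12]
    unfold Date.dayNumber; omega
  obtain ⟨y, m, d⟩ := D
  unfold ofDayNumber
  rw [hmonth]
  simp only [Date.dayNumber, Date.monthIndex, Date.mk.injEq] at *
  omega

theorem step_rightUnique : Relator.RightUnique Step := by
  intro a b c hb hc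
  cases hb with
  | @add_days y m | @add_days_over y m | @add_days_under1 y m =>
    cases hc <;> first | rfl | (have := nbdays_pos y m; omega)
  | @add_days_under2 y m _ _ _ _ h2 =>
    cases hc with
    | add_days_under2 _ h2' => rw [h2] at h2'; cases h2'; rfl
    | _ => have := nbdays_pos y m; omega

theorem eq_of_done_reduces {A : Date} {c : Conf} (h : Reduces (Conf.done A) c) :
    c = Conf.done A := by
  induction h with
  | refl => rfl
  | tail _ hs ih => subst ih; cases hs

theorem reduces_done_unique {c : Conf} {A B : Date} (hA : Reduces c (Conf.done A))
    (hB : Reduces c (Conf.done B)) : A = B := by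
  rcases hA.total_of_right_unique step_rightUnique hB with h | h
  · exact (Conf.done.inj (eq_of_done_reduces h)).symm
  · exact Conf.done.inj (eq_of_done_reduces h)

theorem step_monthStart_add_one {i t : ℤ} (h : monthLength i ≤ t) :
    Step (Conf.pending (monthStart i) t)
      (Conf.pending (monthStart (i + 1)) (t - monthLength i)) := by
  have hs := Step.add_days_over (y := i / 12) (m := 1 + i % 12) (d := 1) (n := t)
    (by unfold monthLength at h; omega)
  rw [show (⟨i / 12, 1 + i % 12, 1⟩ : Date) = monthStart i from rfl, addMonths_monthStart] at hs
  convert hs using 2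
  unfold monthLength; ring

theorem step_monthStart_sub_one {i t : ℤ} (h : t < 0) :
    Step (Conf.pending (monthStart i) t)
      (Conf.pending (monthStart (i - 1)) (t + monthLength (i - 1))) :=
  Step.add_days_under2 (by omega) (addMonths_monthStart i (-1))

theorem reduces_monthStart_of_le {i j t : ℤ} (hij : i ≤ j)
    (ht : firstDay j ≤ firstDay i + t) :
    Reduces (Conf.pending (monthStart i) t)
      (Conf.pending (monthStart j) (firstDay i + t - firstDay j)) := by
  induction j, hij using Int.leInduction with
  | base => rw [add_sub_cancel_left]; exact .refl
  | succ j _ ih =>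
    rw [firstDay_add_one] at ht ⊢
    have := nbdays_pos (j / 12) (1 + j % 12)
    refine (ih (by unfold monthLength at ht; omega)).tail ?_
    convert step_monthStart_add_one (i := j) (t := firstDay i + t - firstDay j) (by omega)
      using 2
    ring

theorem reduces_monthStart_of_ge {i j t : ℤ} (hji : j ≤ i)
    (ht : firstDay i + t < firstDay (j + 1)) :
    Reduces (Conf.pending (monthStart i) t)
      (Conf.pending (monthStart j) (firstDay i + t - firstDay j)) := by
  induction j, hji using Int.leInductionDown with
  | base => rw [add_sub_cancel_left]; exact .refl
  | pred j _ ih =>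
    have hlen := firstDay_add_one (j - 1)
    rw [sub_add_cancel] at hlen ht
    refine (ih (ht.trans (firstDay_strictMono (lt_add_one j)))).tail ?_
    convert step_monthStart_sub_one (i := j) (t := firstDay i + t - firstDay j) (by omega)
      using 2
    omega

theorem reduces_monthStart (i t : ℤ) :
    Reduces (Conf.pending (monthStart i) t) (Conf.done (ofDayNumber (firstDay i + t))) := by
  set N := firstDay i + t
  have hj := firstDay_monthOfDay_le N
  have hj' := lt_firstDay_monthOfDay_add_one N
  have hchain : Reduces (Conf.pending (monthStart i) t)
      (Conf.pending (monthStart (monthOfDay N)) (N - firstDay (monthOfDay N))) := by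
    rcases le_total i (monthOfDay N) with h | h
    · exact reduces_monthStart_of_le h hj
    · exact reduces_monthStart_of_ge h hj'
  rw [firstDay_add_one] at hj'
  exact hchain.tail (Step.add_days (by omega) (by unfold monthLength at hj'; omega))

theorem reduces_ofDayNumber {D : Date} (hD : D.valid) (n : ℤ) :
    Reduces (Conf.pending D n) (Conf.done (ofDayNumber (D.dayNumber + n))) := by
  obtain ⟨h1, h12, hd1, hd⟩ := hD
  have hstart := monthStart_monthIndex h1 h12
  have hlen := monthLength_monthIndex h1 h12
  obtain ⟨y, m, d⟩ := D
  dsimp only at *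
  rcases lt_or_ge (d + n) 1 with hlow | hge
  · have hfirst :
        Reduces (Conf.pending ⟨y, m, d⟩ n) (Conf.pending ⟨y, m, 1⟩ (d - 1 + n)) := by
      rcases eq_or_lt_of_le hd1 with rfl | hd1
      · rw [sub_self, zero_add]; exact .refl
      · exact .single (Step.add_days_under1 hd1 (by omega))
    rw [show Date.dayNumber ⟨y, m, d⟩ + n
        = firstDay (Date.monthIndex ⟨y, m, d⟩) + (d - 1 + n) by unfold Date.dayNumber; ring]
    exact hfirst.trans (hstart ▸ reduces_monthStart _ (d - 1 + n))
  rcases le_or_gt (d + n) (nbdays y m) with hin | hhigh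
  · have hdate : ofDayNumber (Date.dayNumber ⟨y, m, d⟩ + n) = ⟨y, m, d + n⟩ := by
      rw [← ofDayNumber_dayNumber (D := ⟨y, m, d + n⟩) ⟨h1, h12, hge, hin⟩]
      unfold Date.dayNumber Date.monthIndex; ring_nf
    rw [hdate]
    exact .single (Step.add_days hge hin)
  · have hs := Step.add_days_over hhigh
    rw [← hstart, addMonths_monthStart] at hs
    rw [show Date.dayNumber ⟨y, m, d⟩ + n
        = firstDay (Date.monthIndex ⟨y, m, d⟩ + 1) + (n - (nbdays y m - d) - 1) by
      rw [firstDay_add_one, hlen]; unfold Date.dayNumber; ring]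
    exact .head hs (reduces_monthStart _ _)

theorem addDays_eq_ofDayNumber {D : Date} (hD : D.valid) (n : ℤ) :
    addDays D n = ofDayNumber (D.dayNumber + n) :=
  reduces_done_unique
    (Classical.epsilon_spec
      (p := fun D' => D'.valid ∧ Reduces (Conf.pending D n) (Conf.done D'))
      ⟨_, ofDayNumber_valid _, reduces_ofDayNumber hD n⟩).2
    (reduces_ofDayNumber hD n)

/-- **Additivity of day addition**: for every valid date `D` and all integers `n`, `k`,
`(D +D n) +D k = D +D (n + k)`. -/
theorem addDays_add (D : Date) (hD : D.valid) (n k : ℤ) :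
    addDays (addDays D n) k = addDays D (n + k) := by
  rw [addDays_eq_ofDayNumber hD, addDays_eq_ofDayNumber (ofDayNumber_valid _),
    dayNumber_ofDayNumber, addDays_eq_ofDayNumber hD, add_assoc]
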